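/- Let p be an odd prime, t = φ(p-1), let g₁,...,g_t be the distinct primitive roots modulo p, and let S_k(p) = Σ_{i=1}^{t} g_i^k. Then S_k(p) ≡ μ((p-1)/gcd(p-1,k)) · φ(p-1)/φ((p-1)/gcd(p-1,k)) (mod p). -/

import Mathlib

/-!
Reduced mod `p`, the primitive roots are the primitive `(p - 1)`-th roots of unity in `ZMod p`.
In any domain, the `k`-th powers of all `n`-th roots of unity sum to `n` or `0` according as
`n ∣ k`; sorting the roots by exact order and inverting with Möbius turns this into the
Ramanujan sum `c_m(k)` for the primitive `m`-th roots. Hölder's closed form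
`μ(m / g) φ(m) / φ(m / g)`, `g = gcd(m, k)`, is multiplicative in `m` like `c_m(k)`, so the two
agree once they agree on prime powers.
-/

open ArithmeticFunction Finset Polynomial
open scoped ArithmeticFunction.Moebius

namespace ArithmeticFunction

def idOnDivisors (k : ℕ) : ArithmeticFunction ℤ :=
  ⟨fun d => if d ∣ k then d else 0, by simp⟩

theorem idOnDivisors_apply (k d : ℕ) : idOnDivisors k d = if d ∣ k then (d : ℤ) else 0 := rfl

theorem isMultiplicative_idOnDivisors (k : ℕ) : (idOnDivisors k).IsMultiplicative := by
  refine ⟨by simp [idOnDivisors_apply], fun {m n} hmn => ?_⟩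
  have hdvd : m * n ∣ k ↔ m ∣ k ∧ n ∣ k :=
    ⟨fun h => ⟨dvd_of_mul_right_dvd h, dvd_of_mul_left_dvd h⟩,
      fun h => hmn.mul_dvd_of_dvd_of_dvd h.1 h.2⟩
  simp only [idOnDivisors_apply, hdvd, Nat.cast_mul]
  split_ifs <;> simp_all

/-- `ramanujanSum k m` is the Ramanujan sum `c_m(k) = ∑_{d ∣ gcd(m, k)} μ(m / d) d`. -/
def ramanujanSum (k : ℕ) : ArithmeticFunction ℤ := μ * idOnDivisors k

theorem isMultiplicative_ramanujanSum (k : ℕ) : (ramanujanSum k).IsMultiplicative :=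
  isMultiplicative_moebius.mul (isMultiplicative_idOnDivisors k)

theorem moebius_mul_apply_prime_pow_succ (f : ArithmeticFunction ℤ) {q : ℕ} (hq : q.Prime)
    (j : ℕ) : (μ * f) (q ^ (j + 1)) = f (q ^ (j + 1)) - f (q ^ j) := by
  rw [mul_apply, Nat.sum_divisorsAntidiagonal (fun a b => μ a * f b),
    Nat.sum_divisors_prime_pow hq, sum_range_succ', sum_range_succ']
  have hμ : ∀ i, μ (q ^ (i + 1 + 1)) = 0 := fun i => by
    rw [moebius_apply_prime_pow hq (by omega)]; simp
  simp only [hμ, zero_mul, sum_const_zero, zero_add, pow_zero, pow_one, moebius_apply_one,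
    moebius_apply_prime hq, Nat.div_one]
  rw [pow_succ', Nat.mul_div_cancel_left _ hq.pos]
  ring

def holderFormula (k : ℕ) : ArithmeticFunction ℤ :=
  ⟨fun m => μ (m / m.gcd k) * (m.totient / (m / m.gcd k).totient : ℕ), by simp⟩

theorem holderFormula_apply (k m : ℕ) :
    holderFormula k m = μ (m / m.gcd k) * (m.totient / (m / m.gcd k).totient : ℕ) := rfl

theorem isMultiplicative_holderFormula (k : ℕ) : (holderFormula k).IsMultiplicative := by
  refine ⟨by simp [holderFormula_apply], fun {m n} hmn => ?_⟩
  have hm := Nat.gcd_dvd_left m k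
  have hn := Nat.gcd_dvd_left n k
  have hquot : (m / m.gcd k).Coprime (n / n.gcd k) :=
    (hmn.coprime_dvd_left (Nat.div_dvd_of_dvd hm)).coprime_dvd_right (Nat.div_dvd_of_dvd hn)
  have hdiv : m * n / (m * n).gcd k = m / m.gcd k * (n / n.gcd k) := by
    rw [Nat.gcd_comm, hmn.gcd_mul, Nat.gcd_comm k, Nat.gcd_comm k, Nat.div_mul_div_comm hm hn]
  rw [holderFormula_apply, holderFormula_apply, holderFormula_apply, hdiv,
    isMultiplicative_moebius.map_mul_of_coprime hquot, Nat.totient_mul hmn, Nat.totient_mul hquot,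
    ← Nat.div_mul_div_comm (Nat.totient_dvd_of_dvd (Nat.div_dvd_of_dvd hm))
      (Nat.totient_dvd_of_dvd (Nat.div_dvd_of_dvd hn))]
  push_cast
  ring

theorem ramanujanSum_eq_holderFormula (k : ℕ) : ramanujanSum k = holderFormula k := by
  refine (IsMultiplicative.eq_iff_eq_on_prime_powers _ (isMultiplicative_ramanujanSum k) _
    (isMultiplicative_holderFormula k)).mpr fun q n hq => ?_
  rcases n with _ | j
  · simp [(isMultiplicative_ramanujanSum k).map_one, (isMultiplicative_holderFormula k).map_one]
  obtain ⟨i, hi, hgcd⟩ := (Nat.dvd_prime_pow hq).mp (Nat.gcd_dvd_left (q ^ (j + 1)) k)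
  have hdvd : ∀ a ≤ j + 1, q ^ a ∣ k ↔ a ≤ i := fun a ha => by
    rw [← Nat.pow_dvd_pow_iff_le_right hq.one_lt, ← hgcd, Nat.dvd_gcd_iff,
      and_iff_right (pow_dvd_pow q ha)]
  rw [ramanujanSum, moebius_mul_apply_prime_pow_succ _ hq, idOnDivisors_apply, idOnDivisors_apply,
    holderFormula_apply, hgcd, Nat.pow_div hi hq.pos, Nat.totient_prime_pow_succ hq]
  simp only [hdvd _ le_rfl, hdvd _ j.le_succ]
  obtain rfl | rfl | hij : i = j + 1 ∨ i = j ∨ i < j := by omega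
  · rw [if_pos le_rfl, if_pos j.le_succ, Nat.sub_self, pow_zero, moebius_apply_one,
      Nat.totient_one, Nat.div_one]
    push_cast [Nat.cast_sub hq.one_le]
    ring
  · rw [if_neg (by omega), if_pos le_rfl, Nat.add_sub_cancel_left, pow_one, moebius_apply_prime hq,
      Nat.totient_prime hq, Nat.mul_div_cancel _ (Nat.sub_pos_of_lt hq.one_lt)]
    push_cast
    ring
  · rw [if_neg (by omega), if_neg (by omega), moebius_apply_prime_pow hq (by omega),
      if_neg (by omega)]
    simp

end ArithmeticFunction

namespace IsPrimitiveRoot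

variable {R : Type*} [CommRing R] [IsDomain R] {ζ : R} {n : ℕ}

theorem sum_pow_nthRootsFinset_one (hζ : IsPrimitiveRoot ζ n) (k : ℕ) :
    ∑ x ∈ nthRootsFinset n (1 : R), x ^ k = if n ∣ k then (n : R) else 0 := by
  classical
  rcases n.eq_zero_or_pos with rfl | hn
  · simp
  have hpow : ∀ i, (ζ ^ i) ^ n = 1 := fun i => by
    rw [← pow_mul, mul_comm, pow_mul, hζ.pow_eq_one, one_pow]
  have hinj : Set.InjOn (ζ ^ ·) (range n) := fun i hi j hj h =>
    hζ.pow_inj (mem_range.1 hi) (mem_range.1 hj) h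
  have himage : (range n).image (ζ ^ ·) = nthRootsFinset n (1 : R) := by
    refine eq_of_subset_of_card_le (image_subset_iff.2 fun i _ => ?_) ?_
    · exact (Polynomial.mem_nthRootsFinset hn 1).2 (hpow i)
    · rw [hζ.card_nthRootsFinset, card_image_of_injOn hinj, card_range]
  rw [← himage, sum_image hinj]
  simp_rw [← pow_mul, mul_comm _ k, pow_mul]
  split_ifs with hk
  · simp [(hζ.pow_eq_one_iff_dvd k).2 hk]
  · have hgeom := geom_sum_mul (ζ ^ k) n
    rw [hpow, sub_self] at hgeom
    exact (mul_eq_zero.1 hgeom).resolve_right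
      (sub_ne_zero.2 (mt (hζ.pow_eq_one_iff_dvd k).1 hk))

theorem sum_pow_primitiveRoots (hζ : IsPrimitiveRoot ζ n) (k : ℕ) :
    ∑ x ∈ primitiveRoots n R, x ^ k = (ramanujanSum k n : R) := by
  classical
  rcases n.eq_zero_or_pos with rfl | hn
  · simp
  have hroots : ∀ d > 0, d ∣ n →
      ∑ e ∈ d.divisors, ∑ x ∈ primitiveRoots e R, x ^ k = (idOnDivisors k d : R) := by
    intro d hd hdn
    have hζd : IsPrimitiveRoot (ζ ^ (n / d)) d := by
      simpa [Nat.div_div_self hdn hn.ne'] using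
        hζ.pow_of_dvd (Nat.div_pos (Nat.le_of_dvd hn hdn) hd).ne' (Nat.div_dvd_of_dvd hdn)
    rw [← sum_biUnion fun i _ j _ hij => IsPrimitiveRoot.disjoint hij,
      ← nthRoots_one_eq_biUnion_primitiveRoots, hζd.sum_pow_nthRootsFinset_one, idOnDivisors_apply]
    push_cast
    rfl
  rw [← (sum_eq_iff_sum_mul_moebius_eq_on {d | d ∣ n} fun _ _ => dvd_trans).1 hroots n hn dvd_rfl,
    ramanujanSum, mul_apply]
  push_cast
  rfl

end IsPrimitiveRoot

theorem FiniteField.exists_isPrimitiveRoot (K : Type*) [Field K] [Fintype K] :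
    ∃ ζ : K, IsPrimitiveRoot ζ (Fintype.card K - 1) := by
  classical
  obtain ⟨g, hg⟩ := IsCyclic.exists_ofOrder_eq_natCard (α := Kˣ)
  refine ⟨g, ?_⟩
  rw [IsPrimitiveRoot.coe_units_iff, IsPrimitiveRoot.iff_orderOf, hg, Nat.card_eq_fintype_card,
    Fintype.card_units]

theorem ZMod.primitiveRoots_eq_image_filter_orderOf (p : ℕ) [Fact p.Prime] {n : ℕ} (hn : 0 < n) :
    primitiveRoots n (ZMod p) =
      ((Icc 1 (p - 1)).filter fun g : ℕ => orderOf (g : ZMod p) = n).image Nat.cast := by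
  ext x
  simp only [mem_primitiveRoots hn, IsPrimitiveRoot.iff_orderOf, mem_image, mem_filter, mem_Icc]
  constructor
  · intro hx
    have hx0 : x ≠ 0 := by
      rintro rfl
      rw [orderOf_zero] at hx
      omega
    refine ⟨x.val, ⟨⟨?_, ?_⟩, by rwa [ZMod.natCast_zmod_val]⟩, ZMod.natCast_zmod_val x⟩
    · exact Nat.pos_of_ne_zero ((ZMod.val_ne_zero x).2 hx0)
    · have := ZMod.val_lt x; omega
  · rintro ⟨g, ⟨-, hg⟩, rfl⟩
    exact hg

theorem power_sum_primitive_roots_mod_p_general (p k : ℕ) (hp : p.Prime) :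
    (∑ g ∈ (Finset.Icc 1 (p - 1)).filter
        (fun g : ℕ => orderOf ((g : ZMod p)) = p - 1), (g : ℤ) ^ k) ≡
      moebius ((p - 1) / Nat.gcd (p - 1) k) *
        (Nat.totient (p - 1) / Nat.totient ((p - 1) / Nat.gcd (p - 1) k) : ℕ)
      [ZMOD (p : ℤ)] := by
  have := Fact.mk hp
  obtain ⟨ζ, hζ⟩ := FiniteField.exists_isPrimitiveRoot (ZMod p)
  rw [ZMod.card] at hζ
  have hinj : Set.InjOn (Nat.cast : ℕ → ZMod p) (Icc 1 (p - 1)) := fun a ha b hb hab => by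
    rw [coe_Icc, Set.mem_Icc] at ha hb
    simpa [ZMod.val_cast_of_lt (show a < p by omega), ZMod.val_cast_of_lt (show b < p by omega)]
      using congrArg ZMod.val hab
  rw [← ZMod.intCast_eq_intCast_iff, ← holderFormula_apply, ← ramanujanSum_eq_holderFormula,
    ← hζ.sum_pow_primitiveRoots,
    ZMod.primitiveRoots_eq_image_filter_orderOf p (Nat.sub_pos_of_lt hp.one_lt),
    sum_image (hinj.mono (coe_subset.2 (filter_subset _ _)))]
  push_cast
  rfl

theorem power_sum_primitive_roots_mod_p (p k : ℕ) (hp : p.Prime) (hodd : Odd p)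
    (hk : 1 ≤ k) :
    (∑ g ∈ (Finset.Icc 1 (p - 1)).filter
        (fun g : ℕ => orderOf ((g : ZMod p)) = p - 1), (g : ℤ) ^ k) ≡
      moebius ((p - 1) / Nat.gcd (p - 1) k) *
        (Nat.totient (p - 1) / Nat.totient ((p - 1) / Nat.gcd (p - 1) k) : ℕ)
      [ZMOD (p : ℤ)] :=
  power_sum_primitive_roots_mod_p_general p k hp
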